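/- Let K be a field, let R be the quotient of the free noncommutative K-algebra on generators x_0, x_1, x_2, … by the two-sided ideal generated by all products x_k·x_ℓ with k ≥ ℓ, and let α be the K-algebra endomorphism of R induced by x_k ↦ x_{k+1}. Then R is not left α-strongly prime: the two-sided ideal of R generated by the images of the generators x_i is a nonzero left α-ideal, and every finite subset of it has nonzero left annihilator. -/
import Mathlib


/-- The defining relations `x_k * x_ℓ = 0` for `k ≥ ℓ` on the free algebra on `ℕ`. -/
inductive MonomialRel (K : Type*) [Field K] : FreeAlgebra K ℕ → FreeAlgebra K ℕ → Prop
  | rel (k ℓ : ℕ) (h : ℓ ≤ k) : MonomialRel K (FreeAlgebra.ι K k * FreeAlgebra.ι K ℓ) 0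

/-- The image `x̄_i` of the generator `x_i` in the quotient ring `R`. -/
noncomputable def Xgen (K : Type*) [Field K] (i : ℕ) : RingQuot (MonomialRel K) :=
  RingQuot.mkAlgHom K (MonomialRel K) (FreeAlgebra.ι K i)

section Aux

variable (K : Type*) [Field K]

lemma Xgen_mul_Xgen {k ℓ : ℕ} (h : ℓ ≤ k) : Xgen K k * Xgen K ℓ = 0 := by
  have h1 : MonomialRel K (FreeAlgebra.ι K k * FreeAlgebra.ι K ℓ) 0 := MonomialRel.rel k ℓ h
  have h2 := RingQuot.mkAlgHom_rel K h1
  simpa [Xgen, map_mul] using h2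

/-- The algebra map to dual numbers sending every generator to `ε`. -/
noncomputable def toDual : RingQuot (MonomialRel K) →ₐ[K] DualNumber K :=
  RingQuot.liftAlgHom K ⟨FreeAlgebra.lift K (fun _ => (DualNumber.eps : DualNumber K)), by
    rintro _ _ ⟨k, ℓ, h⟩
    simp [DualNumber.eps_mul_eps]⟩

lemma Xgen_ne_zero (i : ℕ) : Xgen K i ≠ 0 := by
  intro h
  have h1 : toDual K (Xgen K i) = DualNumber.eps := by
    simp [toDual, Xgen, RingQuot.liftAlgHom_mkAlgHom_apply]
  rw [h, map_zero] at h1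
  have h2 := congrArg TrivSqZeroExt.snd h1
  simp at h2

/-- Every element `r` has a "constant term" `c` such that `x_n * r = c • x_n`
for all sufficiently large `n`. -/
lemma exists_const_term (r : RingQuot (MonomialRel K)) :
    ∃ c : K, ∃ M : ℕ, ∀ n ≥ M, Xgen K n * r = c • Xgen K n := by
  obtain ⟨y, rfl⟩ := RingQuot.mkAlgHom_surjective K (MonomialRel K) r
  induction y using FreeAlgebra.induction with
  | grade0 c =>
    refine ⟨c, 0, fun n _ => ?_⟩
    rw [AlgHom.commutes, ← Algebra.commutes, ← Algebra.smul_def]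
  | grade1 m =>
    refine ⟨0, m, fun n hn => ?_⟩
    rw [show RingQuot.mkAlgHom K (MonomialRel K) (FreeAlgebra.ι K m) = Xgen K m from rfl,
      Xgen_mul_Xgen K hn, zero_smul]
  | mul a b ha hb =>
    obtain ⟨c₁, M₁, h₁⟩ := ha
    obtain ⟨c₂, M₂, h₂⟩ := hb
    refine ⟨c₁ * c₂, max M₁ M₂, fun n hn => ?_⟩
    rw [map_mul, ← mul_assoc, h₁ n (le_trans (le_max_left _ _) hn), smul_mul_assoc,
      h₂ n (le_trans (le_max_right _ _) hn), smul_smul]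
  | add a b ha hb =>
    obtain ⟨c₁, M₁, h₁⟩ := ha
    obtain ⟨c₂, M₂, h₂⟩ := hb
    refine ⟨c₁ + c₂, max M₁ M₂, fun n hn => ?_⟩
    rw [map_add, mul_add, h₁ n (le_trans (le_max_left _ _) hn),
      h₂ n (le_trans (le_max_right _ _) hn), add_smul]

/-- The set of elements eventually annihilated (on the left) by all large generators,
as a two-sided ideal. -/
noncomputable def annSet : TwoSidedIdeal (RingQuot (MonomialRel K)) :=
  TwoSidedIdeal.mk' {a | ∃ N : ℕ, ∀ n ≥ N, Xgen K n * a = 0}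
    ⟨0, fun n _ => mul_zero _⟩
    (by
      rintro x y ⟨N₁, h₁⟩ ⟨N₂, h₂⟩
      refine ⟨max N₁ N₂, fun n hn => ?_⟩
      rw [mul_add, h₁ n (le_trans (le_max_left _ _) hn),
        h₂ n (le_trans (le_max_right _ _) hn), add_zero])
    (by
      rintro x ⟨N, h⟩
      refine ⟨N, fun n hn => ?_⟩
      exact ((mul_neg _ _).trans (congrArg Neg.neg (h n hn))).trans neg_zero)
    (by
      rintro x y ⟨N, h⟩
      obtain ⟨c, M, hc⟩ := exists_const_term K x
      refine ⟨max M N, fun n hn => ?_⟩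
      rw [← mul_assoc, hc n (le_trans (le_max_left _ _) hn), smul_mul_assoc,
        h n (le_trans (le_max_right _ _) hn), smul_zero])
    (by
      rintro x y ⟨N, h⟩
      refine ⟨N, fun n hn => ?_⟩
      rw [← mul_assoc, h n hn, zero_mul])

lemma mem_annSet {a : RingQuot (MonomialRel K)} :
    a ∈ annSet K ↔ ∃ N : ℕ, ∀ n ≥ N, Xgen K n * a = 0 := by
  rw [annSet, TwoSidedIdeal.mem_mk']
  rfl

lemma ann_of_mem_span {a : RingQuot (MonomialRel K)}
    (ha : a ∈ TwoSidedIdeal.span (Set.range (Xgen K))) :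
    ∃ N : ℕ, ∀ n ≥ N, Xgen K n * a = 0 := by
  refine (mem_annSet K).mp (TwoSidedIdeal.mem_span_iff.mp ha (annSet K) ?_)
  rintro _ ⟨i, rfl⟩
  rw [SetLike.mem_coe, mem_annSet]
  exact ⟨i, fun n hn => Xgen_mul_Xgen K hn⟩

end Aux

/-- `R` is not left `α`-strongly prime: the two-sided ideal generated by the images of the
generators is a nonzero left `α`-ideal every finite subset of which has nonzero left
annihilator. -/
theorem stmt8 (K : Type*) [Field K]
    (α : RingQuot (MonomialRel K) →ₐ[K] RingQuot (MonomialRel K))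
    (hα : ∀ k : ℕ, α (Xgen K k) = Xgen K (k + 1)) :
    (¬ ∀ I : Ideal (RingQuot (MonomialRel K)), I ≠ ⊥ → (∀ x ∈ I, α x ∈ I) →
        ∃ F : Finset (RingQuot (MonomialRel K)), (↑F : Set (RingQuot (MonomialRel K))) ⊆ I ∧
          ∀ k : ℕ, ∀ r : RingQuot (MonomialRel K), (∀ a ∈ F, r * (⇑α)^[k] a = 0) → r = 0) ∧
    TwoSidedIdeal.span (Set.range (Xgen K)) ≠ ⊥ ∧
    (∀ x ∈ TwoSidedIdeal.span (Set.range (Xgen K)),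
        α x ∈ TwoSidedIdeal.span (Set.range (Xgen K))) ∧
    (∀ F : Finset (RingQuot (MonomialRel K)),
        (↑F : Set (RingQuot (MonomialRel K))) ⊆
          (TwoSidedIdeal.span (Set.range (Xgen K)) : Set (RingQuot (MonomialRel K))) →
        ∃ r : RingQuot (MonomialRel K), r ≠ 0 ∧ ∀ a ∈ F, r * a = 0) := by
  classical
  set J := TwoSidedIdeal.span (Set.range (Xgen K)) with hJ
  -- The span is nonzero
  have hmem0 : Xgen K 0 ∈ J := TwoSidedIdeal.subset_span ⟨0, rfl⟩
  have hJbot : J ≠ ⊥ := by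
    intro h
    rw [h] at hmem0
    exact Xgen_ne_zero K 0 hmem0
  -- α-stability
  have hstab : ∀ x ∈ J, α x ∈ J := by
    intro x hx
    have h1 := TwoSidedIdeal.mem_span_iff.mp hx
      (TwoSidedIdeal.comap (α : RingQuot (MonomialRel K) →+* RingQuot (MonomialRel K)) J) ?_
    · rwa [TwoSidedIdeal.mem_comap] at h1
    · rintro _ ⟨k, rfl⟩
      rw [SetLike.mem_coe, TwoSidedIdeal.mem_comap]
      show α (Xgen K k) ∈ J
      rw [hα k]
      exact TwoSidedIdeal.subset_span ⟨k + 1, rfl⟩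
  -- finite subsets have nonzero left annihilator
  have hfin : ∀ F : Finset (RingQuot (MonomialRel K)),
      (↑F : Set (RingQuot (MonomialRel K))) ⊆ (J : Set (RingQuot (MonomialRel K))) →
      ∃ r : RingQuot (MonomialRel K), r ≠ 0 ∧ ∀ a ∈ F, r * a = 0 := by
    intro F hF
    have key : ∃ N : ℕ, ∀ a ∈ F, ∀ n ≥ N, Xgen K n * a = 0 := by
      induction F using Finset.induction_on with
      | empty => exact ⟨0, fun a ha => absurd ha (Finset.notMem_empty a)⟩
      | @insert b s hb ih =>
        obtain ⟨N₁, h₁⟩ := ih (fun x hx => hF (Finset.mem_coe.mpr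
          (Finset.mem_insert_of_mem (Finset.mem_coe.mp hx))))
        obtain ⟨N₂, h₂⟩ := ann_of_mem_span K (hF (Finset.mem_coe.mpr
          (Finset.mem_insert_self b s)))
        refine ⟨max N₁ N₂, fun a ha n hn => ?_⟩
        rcases Finset.mem_insert.mp ha with rfl | ha
        · exact h₂ n (le_trans (le_max_right _ _) hn)
        · exact h₁ a ha n (le_trans (le_max_left _ _) hn)
    obtain ⟨N, hN⟩ := key
    exact ⟨Xgen K N, Xgen_ne_zero K N, fun a ha => hN a ha N le_rfl⟩
  refine ⟨?_, hJbot, hstab, hfin⟩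
  intro h
  obtain ⟨F, hFsub, hFann⟩ := h (TwoSidedIdeal.asIdeal J)
    (by
      intro hbot
      apply Xgen_ne_zero K 0
      have h0 : Xgen K 0 ∈ TwoSidedIdeal.asIdeal J := TwoSidedIdeal.mem_asIdeal.mpr hmem0
      rwa [hbot, Ideal.mem_bot] at h0)
    (fun x hx => TwoSidedIdeal.mem_asIdeal.mpr (hstab x (TwoSidedIdeal.mem_asIdeal.mp hx)))
  have hFsub' : (↑F : Set (RingQuot (MonomialRel K))) ⊆ (J : Set (RingQuot (MonomialRel K))) := by
    intro a ha
    exact TwoSidedIdeal.mem_asIdeal.mp (hFsub ha)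
  obtain ⟨r, hr, hra⟩ := hfin F hFsub'
  exact hr (hFann 0 r (by simpa using hra))
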